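/- arXiv:2109.04308 — 5 statements merged into one kernel-verified Lean document; each statement's English description precedes it below -/
import Mathlib

section
/- Let N be a prime, let Γ = Γ0(N^2), and let β_N = [[N,0],[0,1]] ∈ GL_2(Q). Then the double coset Γ β_N Γ ⊂ GL_2(Q) is the disjoint union of the N pairwise distinct left cosets Γ β_N [[1,0],[iN^2,1]] for i = 0, 1, …, N−1. -/
/-!
Write `u k = [[1, 0], [k, 1]]`. Conjugation by `β = diag(N, 1)` sends `γ ∈ Γ₀(N²)` to
`β γ β⁻¹ ∈ Γ₀(N)` and `u (i N²)` to `u (i N)`. Hence `Γ β Γ = Γ Γ₀(N) β`, and everything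
follows from the decomposition of `Γ₀(N)` into the `N` distinct cosets `Γ₀(N²) u (i N)`,
`0 ≤ i < N`: the lower-left entry of `γ = [[a, b], [N c, d]] ∈ Γ₀(N)` is cleared modulo `N²`
by `i ≡ a c (mod N)`, and `u ((j - i) N) ∈ Γ₀(N²)` forces `N ∣ j - i`.
-/

open CongruenceSubgroup Matrix MatrixGroups

def toRatMatrix : SL(2, ℤ) →* Matrix (Fin 2) (Fin 2) ℚ :=
  SpecialLinearGroup.coeMonoidHom.comp (SpecialLinearGroup.map (Int.castRingHom ℚ))

lemma toRatMatrix_apply (γ : SL(2, ℤ)) :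
    toRatMatrix γ = (γ : Matrix (Fin 2) (Fin 2) ℤ).map (fun x : ℤ => (x : ℚ)) :=
  rfl

lemma toRatMatrix_mk (M : Matrix (Fin 2) (Fin 2) ℤ) (h : M.det = 1) :
    toRatMatrix ⟨M, h⟩ = M.map (fun x : ℤ => (x : ℚ)) :=
  rfl

lemma toRatMatrix_injective : Function.Injective toRatMatrix := fun _ _ h =>
  Subtype.ext (Matrix.map_injective Int.cast_injective h)

lemma setOf_eq_image_toRatMatrix (H : Subgroup SL(2, ℤ)) :
    {A | ∃ γ ∈ H, A = (γ : Matrix (Fin 2) (Fin 2) ℤ).map (fun x : ℤ => (x : ℚ))} =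
      toRatMatrix '' H := by
  ext A
  exact ⟨fun ⟨γ, hγ, h⟩ => ⟨γ, hγ, h.symm⟩, fun ⟨γ, hγ, h⟩ => ⟨γ, hγ, h.symm⟩⟩

lemma mem_Gamma0_iff_dvd {N : ℕ} {γ : SL(2, ℤ)} : γ ∈ Gamma0 N ↔ (N : ℤ) ∣ γ 1 0 :=
  ZMod.intCast_zmod_eq_zero_iff_dvd _ N

def lowerUnipotent (k : ℤ) : SL(2, ℤ) :=
  ⟨!![1, 0; k, 1], by simp⟩

@[simp]
lemma coe_lowerUnipotent (k : ℤ) :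
    (lowerUnipotent k : Matrix (Fin 2) (Fin 2) ℤ) = !![1, 0; k, 1] :=
  rfl

lemma lowerUnipotent_zero : lowerUnipotent 0 = 1 := by
  ext : 1
  simp [Matrix.one_fin_two]

lemma lowerUnipotent_add (a b : ℤ) :
    lowerUnipotent (a + b) = lowerUnipotent a * lowerUnipotent b := by
  ext : 1
  simp

lemma inv_lowerUnipotent (a : ℤ) : (lowerUnipotent a)⁻¹ = lowerUnipotent (-a) :=
  inv_eq_of_mul_eq_one_right <| by
    rw [← lowerUnipotent_add, add_neg_cancel, lowerUnipotent_zero]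

lemma lowerUnipotent_mem_Gamma0_iff {N : ℕ} {k : ℤ} :
    lowerUnipotent k ∈ Gamma0 N ↔ (N : ℤ) ∣ k :=
  mem_Gamma0_iff_dvd

lemma toRatMatrix_lowerUnipotent (k : ℤ) :
    toRatMatrix (lowerUnipotent k) = !![1, 0; (k : ℚ), 1] := by
  ext i j
  fin_cases i <;> fin_cases j <;> simp [toRatMatrix_apply]

lemma diag_mul_toRatMatrix_lowerUnipotent (N : ℕ) (k : ℤ) :
    !![(N : ℚ), 0; 0, 1] * toRatMatrix (lowerUnipotent (k * N)) =
      toRatMatrix (lowerUnipotent k) * !![(N : ℚ), 0; 0, 1] := by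
  simp only [toRatMatrix_lowerUnipotent, Matrix.mul_fin_two]
  push_cast
  ring_nf

lemma exists_mem_Gamma0_diag_mul_eq_mul_diag {N : ℕ} {γ : SL(2, ℤ)} (hγ : γ ∈ Gamma0 (N ^ 2)) :
    ∃ γ' ∈ Gamma0 N, !![(N : ℚ), 0; 0, 1] * toRatMatrix γ =
      toRatMatrix γ' * !![(N : ℚ), 0; 0, 1] := by
  obtain ⟨c, hc⟩ := mem_Gamma0_iff_dvd.1 hγ
  push_cast at hc
  have hdet : γ 0 0 * γ 1 1 - γ 0 1 * (N ^ 2 * c) = 1 := by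
    rw [← hc, ← Matrix.det_fin_two]; exact γ.2
  refine ⟨⟨!![γ 0 0, N * γ 0 1; N * c, γ 1 1], ?_⟩, ?_, ?_⟩
  · rw [Matrix.det_fin_two_of]; linear_combination hdet
  · exact mem_Gamma0_iff_dvd.2 (dvd_mul_right _ _)
  · ext i j
    fin_cases i <;> fin_cases j <;>
      simp [toRatMatrix_apply, toRatMatrix_mk, Matrix.mul_apply, hc] <;> ring

lemma exists_mem_Gamma0_sq_eq_mul_lowerUnipotent {N : ℕ} [NeZero N] {γ : SL(2, ℤ)}
    (hγ : γ ∈ Gamma0 N) :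
    ∃ i : Fin N, ∃ δ ∈ Gamma0 (N ^ 2), γ = δ * lowerUnipotent (i * N) := by
  obtain ⟨c, hc⟩ := mem_Gamma0_iff_dvd.1 hγ
  have hdet : γ 0 0 * γ 1 1 - γ 0 1 * (N * c) = 1 := by
    rw [← hc, ← Matrix.det_fin_two]; exact γ.2
  -- `γ 0 0` inverts `γ 1 1` modulo `N`
  obtain ⟨i, k, hk⟩ : ∃ i : Fin N, (N : ℤ) ∣ c - γ 1 1 * i := by
    let r : ZMod N := γ 0 0 * c
    refine ⟨⟨r.val, r.val_lt⟩, (ZMod.intCast_zmod_eq_zero_iff_dvd _ N).1 ?_⟩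
    have hdetN := congrArg (Int.cast : ℤ → ZMod N) hdet
    push_cast at hdetN ⊢
    rw [ZMod.natCast_self] at hdetN
    rw [ZMod.natCast_val, ZMod.cast_id]
    linear_combination (-(c : ZMod N)) * hdetN
  refine ⟨i, γ * lowerUnipotent (-(i * N)), mem_Gamma0_iff_dvd.2 ⟨k, ?_⟩, ?_⟩
  · simp [Matrix.mul_apply, hc]
    linear_combination (N : ℤ) * hk
  · rw [mul_assoc, ← lowerUnipotent_add, neg_add_cancel, lowerUnipotent_zero, mul_one]

lemma eq_of_mul_lowerUnipotent_eq {N : ℕ} {g₁ g₂ : SL(2, ℤ)} (hg₁ : g₁ ∈ Gamma0 (N ^ 2))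
    (hg₂ : g₂ ∈ Gamma0 (N ^ 2)) {i j : Fin N}
    (h : g₁ * lowerUnipotent (i * N) = g₂ * lowerUnipotent (j * N)) : i = j := by
  have hu : lowerUnipotent ((j - i : ℤ) * N) ∈ Gamma0 (N ^ 2) := by
    have : lowerUnipotent ((j - i : ℤ) * N) = g₂⁻¹ * g₁ := by
      rw [sub_mul, sub_eq_add_neg, lowerUnipotent_add, ← inv_lowerUnipotent,
        eq_inv_mul_iff_mul_eq, ← mul_assoc, ← h, mul_inv_cancel_right]
    rw [this]; exact mul_mem (inv_mem hg₂) hg₁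
  have hN : (N : ℤ) ≠ 0 := by exact_mod_cast (Fin.pos i).ne'
  obtain ⟨k, hk⟩ := lowerUnipotent_mem_Gamma0_iff.1 hu
  have hdvd : (N : ℤ) ∣ j - i :=
    ⟨k, mul_right_cancel₀ hN (by push_cast at hk ⊢; linear_combination hk)⟩
  exact Fin.ext (Nat.ModEq.eq_of_lt_of_lt (Nat.modEq_iff_dvd.2 hdvd) i.2 j.2)

/-- Let `N` be prime, `Γ = Γ₀(N²)` viewed as a set of matrices in `GL₂(ℚ)`, and
`β_N = [[N,0],[0,1]]`. Then the double coset `Γ β_N Γ` is the disjoint union of the `N`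
pairwise distinct left cosets `Γ β_N [[1,0],[iN²,1]]` for `i = 0, 1, …, N-1`. -/
theorem gamma0_double_coset_decomposition_UN
    (N : ℕ) (hN : N.Prime)
    (Γs : Set (Matrix (Fin 2) (Fin 2) ℚ))
    (hΓ : Γs = {A | ∃ γ ∈ Gamma0 (N ^ 2),
      A = ((γ : Matrix (Fin 2) (Fin 2) ℤ)).map (fun x : ℤ => (x : ℚ))})
    (β : Matrix (Fin 2) (Fin 2) ℚ) (hβ : β = !![(N : ℚ), 0; 0, 1])
    (rep : Fin N → Matrix (Fin 2) (Fin 2) ℚ)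
    (hrep : ∀ i : Fin N, rep i = β * !![(1 : ℚ), 0; (i : ℚ) * (N : ℚ) ^ 2, 1]) :
    ({x | ∃ g₁ ∈ Γs, ∃ g₂ ∈ Γs, x = g₁ * β * g₂} =
        ⋃ i : Fin N, {x | ∃ g ∈ Γs, x = g * rep i}) ∧
    ∀ i j : Fin N, i ≠ j →
      Disjoint {x | ∃ g ∈ Γs, x = g * rep i} {x | ∃ g ∈ Γs, x = g * rep j} := by
  have : NeZero N := ⟨hN.ne_zero⟩
  rw [setOf_eq_image_toRatMatrix] at hΓ
  subst hΓ hβ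
  have hrep_right (i : Fin N) :
      rep i = !![(N : ℚ), 0; 0, 1] * toRatMatrix (lowerUnipotent (i * N ^ 2)) := by
    rw [hrep, toRatMatrix_lowerUnipotent]; push_cast; rfl
  have hrep_left (i : Fin N) :
      rep i = toRatMatrix (lowerUnipotent (i * N)) * !![(N : ℚ), 0; 0, 1] := by
    rw [hrep_right, ← diag_mul_toRatMatrix_lowerUnipotent, mul_assoc, ← sq]
  refine ⟨Set.Subset.antisymm ?_ ?_, fun i j hij => Set.disjoint_left.2 ?_⟩
  · rintro x ⟨_, ⟨g₁, hg₁, rfl⟩, _, ⟨g₂, hg₂, rfl⟩, rfl⟩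
    obtain ⟨g₂', hg₂', hconj⟩ := exists_mem_Gamma0_diag_mul_eq_mul_diag hg₂
    obtain ⟨i, δ, hδ, rfl⟩ := exists_mem_Gamma0_sq_eq_mul_lowerUnipotent hg₂'
    refine Set.mem_iUnion.2 ⟨i, toRatMatrix (g₁ * δ), ⟨_, mul_mem hg₁ hδ, rfl⟩, ?_⟩
    rw [mul_assoc, hconj, hrep_left, map_mul, map_mul, mul_assoc, mul_assoc]
  · refine Set.iUnion_subset fun i => ?_
    rintro x ⟨_, ⟨g, hg, rfl⟩, rfl⟩
    refine ⟨toRatMatrix g, ⟨g, hg, rfl⟩, toRatMatrix (lowerUnipotent (i * N ^ 2)),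
      ⟨_, lowerUnipotent_mem_Gamma0_iff.2 ?_, rfl⟩, by rw [hrep_right, mul_assoc]⟩
    push_cast; exact dvd_mul_left _ _
  · rintro x ⟨_, ⟨g₁, hg₁, rfl⟩, rfl⟩ ⟨_, ⟨g₂, hg₂, rfl⟩, h⟩
    have hβ : IsUnit !![(N : ℚ), 0; 0, 1] := by
      simp [Matrix.isUnit_iff_isUnit_det, hN.ne_zero]
    rw [hrep_left, hrep_left, ← mul_assoc, ← mul_assoc, ← map_mul, ← map_mul,
      hβ.mul_left_inj] at h
    exact hij (eq_of_mul_lowerUnipotent_eq hg₁ hg₂ (toRatMatrix_injective h))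
end

section
/- Let N be a prime. The N+1 points ∞, 0, 1/N, 2/N, …, (N−1)/N of P^1(Q) form a complete set of representatives for the orbits of Γ0(N^2) acting on P^1(Q) by Möbius transformations: they lie in pairwise distinct orbits and every element of P^1(Q) is Γ0(N^2)-equivalent to exactly one of them. In particular, Γ0(N^2) has exactly N+1 cusps. -/
/-!
Write a point of `ℙ¹(ℚ)` as `±(x, y)` with `x, y` coprime. If `N ∤ y`, `N² ∣ y`, or `y = N t` with
`N ∤ t`, a bottom row `(c, d)` with `N² ∣ c` and `c x + d y` equal to `1`, `0`, or `N` respectively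
completes to a matrix of `Γ₀(N²)` carrying `(x, y)` to `0`, to `∞`, or to `k / N` with
`k ≡ x t (mod N)`; primality of `N` makes `k ≢ 0`.  Conversely, whether `N ∣ y`, and if so the
residue of `x y` modulo `N²`, is unchanged by `Γ₀(N²)` and by the sign, and these data separate
the `N + 1` representatives.
-/

open CongruenceSubgroup

def Gamma0Related (n : ℤ) (v w : ℤ × ℤ) : Prop :=
  ∃ a b c d : ℤ, a * d - b * c = 1 ∧ n ∣ c ∧ ∃ u : ℤˣ,
    a * v.1 + b * v.2 = u * w.1 ∧ c * v.1 + d * v.2 = u * w.2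

lemma exists_mem_gamma0_iff_gamma0Related (n : ℕ) (v w : ℤ × ℤ) :
    (∃ γ ∈ Gamma0 n, ∃ u : ℤˣ,
        (γ : Matrix (Fin 2) (Fin 2) ℤ) 0 0 * v.1 +
          (γ : Matrix (Fin 2) (Fin 2) ℤ) 0 1 * v.2 = (u : ℤ) * w.1 ∧
        (γ : Matrix (Fin 2) (Fin 2) ℤ) 1 0 * v.1 +
          (γ : Matrix (Fin 2) (Fin 2) ℤ) 1 1 * v.2 = (u : ℤ) * w.2) ↔
      Gamma0Related n v w := by
  constructor
  · rintro ⟨γ, hγ, u, h1, h2⟩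
    refine ⟨_, _, _, _, by rw [← Matrix.det_fin_two]; exact γ.det_coe, ?_, u, h1, h2⟩
    exact (ZMod.intCast_zmod_eq_zero_iff_dvd _ n).mp (Gamma0_mem.mp hγ)
  · rintro ⟨a, b, c, d, hdet, hc, u, h1, h2⟩
    refine ⟨⟨!![a, b; c, d], by simpa [Matrix.det_fin_two_of] using hdet⟩, ?_, u,
      by simpa using h1, by simpa using h2⟩
    exact Gamma0_mem.mpr ((ZMod.intCast_zmod_eq_zero_iff_dvd _ n).mpr hc)

def cuspInvariant (n : ℤ) (v : ℤ × ℤ) : Option ℤ :=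
  if n ∣ v.2 then some (v.1 * v.2 % n ^ 2) else none

namespace Gamma0Related

variable {n : ℤ} {v w : ℤ × ℤ}

lemma dvd_snd_iff {m : ℤ} (h : Gamma0Related n v w) (hm : m ∣ n) : m ∣ v.2 ↔ m ∣ w.2 := by
  obtain ⟨a, b, c, d, hdet, hc, u, -, h2⟩ := h
  obtain ⟨e, rfl⟩ := hm.trans hc
  have hd : IsCoprime m d := ⟨-(b * e), a, by linear_combination hdet⟩
  rw [← Units.dvd_mul_left (b := w.2) (u := u), ← h2, dvd_add_right (by simp [mul_assoc])]
  exact ⟨fun hy => hy.mul_left d, hd.dvd_of_dvd_mul_left⟩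

lemma sq_dvd_fst_mul_snd_sub {m : ℤ} (h : Gamma0Related (m ^ 2) v w) (hv : m ∣ v.2) :
    m ^ 2 ∣ v.1 * v.2 - w.1 * w.2 := by
  obtain ⟨a, b, c, d, hdet, ⟨e, rfl⟩, u, h1, h2⟩ := h
  obtain ⟨t, ht⟩ := hv
  have hw : w.1 * w.2 = (a * v.1 + b * v.2) * (m ^ 2 * e * v.1 + d * v.2) := by
    rw [h1, h2, mul_mul_mul_comm, ← Units.val_mul, Int.units_mul_self, Units.val_one, one_mul]
  rw [hw, ht]
  -- `ad - bc = 1` turns `xy - (ax + by)(cx + dy)` into `-acx² - 2bcxy - bdy²`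
  exact ⟨e * (-(a * v.1 ^ 2) - 2 * b * v.1 * (m * t)) - t ^ 2 * b * d, by
    linear_combination (-(m * t * v.1)) * hdet⟩

lemma cuspInvariant_eq (h : Gamma0Related (n ^ 2) v w) :
    cuspInvariant n v = cuspInvariant n w := by
  have hsnd := h.dvd_snd_iff (dvd_pow_self n two_ne_zero)
  by_cases hv : n ∣ v.2
  · rw [cuspInvariant, cuspInvariant, if_pos hv, if_pos (hsnd.mp hv), Option.some_inj]
    exact (Int.modEq_iff_dvd.mpr (h.sq_dvd_fst_mul_snd_sub hv)).symm
  · rw [cuspInvariant, cuspInvariant, if_neg hv, if_neg (hsnd.not.mp hv)]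

end Gamma0Related

/-- Any completion `[[a, b], [c, d]]` sends `(x, y)` to `(r₀, g)` with `d r₀ ≡ x` and `c r₀ ≡ -y`
modulo `g`, which determines `r₀` modulo `g`; adding multiples of the bottom row to the top one
then moves `r₀` to any `r` in its class. -/
lemma gamma0Related_of_isCoprime {n x y c d r g : ℤ} (hn : n ∣ c) (hcd : IsCoprime c d)
    (hg : c * x + d * y = g) (hx : g ∣ d * r - x) (hy : g ∣ c * r + y) :
    Gamma0Related n (x, y) (r, g) := by
  obtain ⟨p, q, hpq⟩ := hcd
  obtain ⟨s, hs⟩ : g ∣ r - (q * x - p * y) := by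
    have hr : r - (q * x - p * y) = q * (d * r - x) + p * (c * r + y) := by
      linear_combination (-r) * hpq
    rw [hr]
    exact dvd_add (hx.mul_left q) (hy.mul_left p)
  refine ⟨q + s * c, -p + s * d, c, d, by linear_combination hpq, hn, 1, ?_, ?_⟩
  · simp only [Units.val_one, one_mul]
    linear_combination s * hg - hs
  · simpa using hg

lemma gamma0Related_one_zero {n x y : ℤ} (hxy : IsCoprime x y) (hy : n ∣ y) :
    Gamma0Related n (x, y) (1, 0) :=
  gamma0Related_of_isCoprime (dvd_neg.mpr hy) hxy.symm.neg_left (by ring) (by simp) (by simp)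

lemma gamma0Related_zero_one {n x y : ℤ} (h : IsCoprime (n * x) y) :
    Gamma0Related n (x, y) (0, 1) := by
  obtain ⟨p, q, hpq⟩ := h
  exact gamma0Related_of_isCoprime (c := n * p) (d := q) (dvd_mul_right n p)
    ⟨x, y, by linear_combination hpq⟩ (by linear_combination hpq) (one_dvd _) (one_dvd _)

lemma gamma0Related_mul_emod {n x t : ℤ} (h : IsCoprime (n * x) t) :
    Gamma0Related (n ^ 2) (x, n * t) (x * t % n, n) := by
  obtain ⟨p, q, hpq⟩ := h
  have hcd : IsCoprime (n ^ 2 * p) q := by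
    have h1 : IsCoprime n q := ⟨p * x, t, by linear_combination hpq⟩
    have h2 : IsCoprime (n * p) q := ⟨x, t, by linear_combination hpq⟩
    simpa [sq, mul_assoc] using h1.mul_left h2
  refine gamma0Related_of_isCoprime (dvd_mul_right _ p) hcd (by linear_combination n * hpq) ?_
    ⟨n * p * (x * t % n) + t, by ring⟩
  have hr : q * (x * t % n) - x = q * (x * t % n - x * t) - n * (p * x * x) := by
    linear_combination x * hpq
  rw [hr]
  exact dvd_sub ((Int.mod_modEq (x * t) n).symm.dvd.mul_left q) (dvd_mul_right _ _)

def cuspRep (N : ℕ) : ℕ → ℤ × ℤ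
  | 0 => (1, 0)
  | 1 => (0, 1)
  | k + 2 => (k + 1, N)

lemma cuspInvariant_cuspRep_add_two {N k : ℕ} (hk : k + 2 ≤ N) :
    cuspInvariant N (cuspRep N (k + 2)) = some (((k : ℤ) + 1) * N) := by
  rw [cuspRep, cuspInvariant, if_pos dvd_rfl, Int.emod_eq_of_lt (by positivity)]
  rw [sq]
  exact mul_lt_mul_of_pos_right (by omega) (by omega)

lemma cuspInvariant_cuspRep_injective {N : ℕ} (hN : 2 ≤ N) :
    Function.Injective (fun i : Fin (N + 1) => cuspInvariant N (cuspRep N i)) := by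
  have h0 : cuspInvariant N (cuspRep N 0) = some 0 := by simp [cuspRep, cuspInvariant]
  have h1 : cuspInvariant N (cuspRep N 1) = none := by
    rw [cuspRep, cuspInvariant, if_neg]
    exact fun h => by have := Int.le_of_dvd one_pos h; omega
  rintro ⟨_ | _ | k, hk⟩ ⟨_ | _ | l, hl⟩ h <;>
    simp (disch := omega) only [h0, h1, cuspInvariant_cuspRep_add_two, Option.some_inj,
      reduceCtorEq, Fin.mk.injEq] at h ⊢
  all_goals norm_cast at h
  · exact (Nat.mul_pos (Nat.succ_pos l) (by omega)).ne h
  · exact (Nat.mul_pos (Nat.succ_pos k) (by omega)).ne' h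
  · rw [Nat.eq_of_mul_eq_mul_right (by omega) h]

lemma exists_gamma0Related_cuspRep_of_not_dvd {N : ℕ} (hN : N.Prime) {x t : ℤ}
    (hxt : IsCoprime x (N * t)) (ht : ¬ (N : ℤ) ∣ t) :
    ∃ i : Fin (N + 1), Gamma0Related ((N : ℤ) ^ 2) (x, N * t) (cuspRep N i) := by
  have hNp : Prime (N : ℤ) := Nat.prime_iff_prime_int.mp hN
  have hx : ¬ (N : ℤ) ∣ x := fun hx => hNp.not_isUnit (hxt.isUnit_of_dvd' hx (dvd_mul_right _ _))
  have hk : x * t % N ≠ 0 := fun h0 =>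
    (hNp.dvd_or_dvd (Int.dvd_of_emod_eq_zero h0)).elim hx ht
  have hN0 : (0 : ℤ) < N := by exact_mod_cast hN.pos
  have hk0 := Int.emod_nonneg (x * t) hN0.ne'
  have hkN := Int.emod_lt_of_pos (x * t) hN0
  obtain ⟨m, hm⟩ : ∃ m : ℕ, x * t % N = m + 1 := ⟨(x * t % N - 1).toNat, by omega⟩
  refine ⟨⟨m + 2, by omega⟩, ?_⟩
  have h := gamma0Related_mul_emod ((hNp.coprime_iff_not_dvd.mpr ht).mul_left
    (hxt.of_isCoprime_of_dvd_right (dvd_mul_left t N)))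
  rwa [hm] at h

lemma exists_gamma0Related_cuspRep {N : ℕ} (hN : N.Prime) {x y : ℤ} (hxy : IsCoprime x y) :
    ∃ i : Fin (N + 1), Gamma0Related ((N : ℤ) ^ 2) (x, y) (cuspRep N i) := by
  by_cases hy2 : (N : ℤ) ^ 2 ∣ y
  · exact ⟨0, gamma0Related_one_zero hxy hy2⟩
  by_cases hy1 : (N : ℤ) ∣ y
  · obtain ⟨t, rfl⟩ := hy1
    refine exists_gamma0Related_cuspRep_of_not_dvd hN hxy fun ht => hy2 ?_
    simpa [sq] using mul_dvd_mul_left (N : ℤ) ht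
  · have hNy := (Nat.prime_iff_prime_int.mp hN).coprime_iff_not_dvd.mpr hy1
    exact ⟨⟨1, by have := hN.two_le; omega⟩, gamma0Related_zero_one (hNy.pow_left.mul_left hxy)⟩

/-- Points of `ℙ¹(ℚ)` are coprime integer vectors `(x, y)` up to sign, standing for `x / y`,
and `Γ₀(N²)` acts on them by matrix multiplication. -/
theorem gamma0_cusp_representatives
    (N : ℕ) (hN : N.Prime)
    (Rel : ℤ × ℤ → ℤ × ℤ → Prop)
    (hRel : ∀ v w : ℤ × ℤ, Rel v w ↔
      ∃ γ ∈ Gamma0 (N ^ 2), ∃ u : ℤˣ,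
        (γ : Matrix (Fin 2) (Fin 2) ℤ) 0 0 * v.1 +
          (γ : Matrix (Fin 2) (Fin 2) ℤ) 0 1 * v.2 = (u : ℤ) * w.1 ∧
        (γ : Matrix (Fin 2) (Fin 2) ℤ) 1 0 * v.1 +
          (γ : Matrix (Fin 2) (Fin 2) ℤ) 1 1 * v.2 = (u : ℤ) * w.2)
    (rep : Fin (N + 1) → ℤ × ℤ)
    (hrep0 : rep 0 = (1, 0)) (hrep1 : rep 1 = (0, 1))
    (hrep : ∀ i : Fin (N + 1), 2 ≤ (i : ℕ) → rep i = (((i : ℕ) : ℤ) - 1, (N : ℤ))) :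
    ∀ x y : ℤ, Int.gcd x y = 1 → ∃! i : Fin (N + 1), Rel (x, y) (rep i) := by
  intro x y hxy
  have hRel' (w : ℤ × ℤ) : Rel (x, y) w ↔ Gamma0Related ((N : ℤ) ^ 2) (x, y) w := by
    rw [hRel, exists_mem_gamma0_iff_gamma0Related, Nat.cast_pow]
  have hrep' (i : Fin (N + 1)) : rep i = cuspRep N i := by
    rcases i with ⟨_ | _ | k, hi⟩
    · exact hrep0
    · exact (congrArg rep (Fin.ext (Nat.mod_eq_of_lt hi).symm)).trans hrep1
    · rw [hrep _ (by simp), cuspRep]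
      push_cast
      ring_nf
  simp only [hRel', hrep']
  obtain ⟨i, hi⟩ := exists_gamma0Related_cuspRep hN (Int.isCoprime_iff_gcd_eq_one.mpr hxy)
  exact ⟨i, hi, fun j hj =>
    cuspInvariant_cuspRep_injective hN.two_le (hj.cuspInvariant_eq.symm.trans hi.cuspInvariant_eq)⟩
end

section
/- Let p ≥ 5 and N be distinct primes with N ≢ 1 (mod p), and let k be a field of characteristic p. Let D be the free k-module with basis {∞, [0]} ∪ {[x] : x ∈ (Z/NZ)^×}, let D^0 ⊂ D be the kernel of the k-linear map sending every basis element to 1, and set 𝔠 = Σ_{x ∈ (Z/NZ)^×} ([x] − [0]) ∈ D^0. For each prime ℓ ≠ N define a k-linear operator T_ℓ on D by T_ℓ∞ = (ℓ+1)∞, T_ℓ[0] = (ℓ+1)[0], and T_ℓ[x] = ℓ[ℓx] + [ℓ^{−1}x] for x ∈ (Z/NZ)^×; define U_N by U_N(c) = N·[0] for every basis element c ≠ ∞ and U_N(∞) = ∞ + Σ_{x ∈ (Z/NZ)^×}[x]. Then: (i) the elements ∞ − [0] + 𝔠 and 𝔠 are k-linearly independent, satisfy T_ℓ v = (ℓ+1)v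 for every prime ℓ ≠ N, and satisfy U_N 𝔠 = 0 and U_N(∞ − [0] + 𝔠) = ∞ − [0] + 𝔠; (ii) conversely, every element 𝔞 ∈ D^0 with T_ℓ 𝔞 = (ℓ+1)𝔞 for every prime ℓ ≠ N lies in the k-span of {∞ − [0] + 𝔠, 𝔠}. -/
/-!
Both vectors are constant (equal to `1`) on the cusps `[x]`, `x ∈ (ℤ/N)ˣ`, which makes the
eigenvector and `U_N` identities direct computations, using `#(ℤ/N)ˣ = N - 1`.

For the converse, fix `u ∈ (ℤ/N)ˣ`. By Dirichlet's theorem and the Chinese remainder theorem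
there are primes `ℓ₁, ℓ₂ ≡ u (mod N)` with `ℓ₁ ≡ 1` and `ℓ₂ ≡ -1 (mod p)`; these differ in `k`
because `p > 2`. Subtracting the two eigen-equations at `[y]` gives `𝔞[u⁻¹y] = 𝔞[y]`, so `𝔞` is
constant on the `[x]`, and such an element of degree zero is determined by its values at `∞`
and at the `[x]`, i.e. lies in the span of `∞ - [0] + 𝔠` and `𝔠`.
-/

theorem Nat.exists_prime_gt_natCast_eq_of_coprime {m n : ℕ} [NeZero m] [NeZero n]
    (h : m.Coprime n) (u : (ZMod m)ˣ) (w : (ZMod n)ˣ) (b : ℕ) :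
    ∃ ℓ > b, ℓ.Prime ∧ (ℓ : ZMod m) = u ∧ (ℓ : ZMod n) = w := by
  let e := ZMod.chineseRemainder h
  have hunit : IsUnit (e.symm (u, w)) :=
    (Prod.isUnit_iff.2 ⟨u.isUnit, w.isUnit⟩).map e.symm
  obtain ⟨ℓ, hbℓ, hℓ, hcast⟩ := Nat.forall_exists_prime_gt_and_eq_mod hunit b
  have he : ((ℓ : ZMod m), (ℓ : ZMod n)) = ((u : ZMod m), (w : ZMod n)) := by
    rw [← e.apply_symm_apply (u, w), ← hcast, map_natCast]
    rfl
  exact ⟨ℓ, hbℓ, hℓ, (Prod.ext_iff.1 he).1, (Prod.ext_iff.1 he).2⟩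

theorem Nat.Prime.cast_totient {R : Type*} [Ring R] {n : ℕ} (hn : n.Prime) :
    (n.totient : R) = n - 1 := by
  rw [Nat.totient_prime hn, Nat.cast_sub hn.one_le, Nat.cast_one]

namespace CuspidalDivisor

variable {N : ℕ} {k : Type*} [Field k]

def heckeT (ℓ : ℕ) (u : (ZMod N)ˣ) (f : Fin 2 ⊕ (ZMod N)ˣ → k) : Fin 2 ⊕ (ZMod N)ˣ → k :=
  Sum.elim (fun i => ((ℓ : k) + 1) * f (Sum.inl i))
    (fun y => (ℓ : k) * f (Sum.inr (u⁻¹ * y)) + f (Sum.inr (u * y)))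

theorem heckeT_sumElim_const (ℓ : ℕ) (u : (ZMod N)ˣ) (g : Fin 2 → k) (t : k) :
    heckeT ℓ u (Sum.elim g fun _ => t) = ((ℓ : k) + 1) • Sum.elim g fun _ => t := by
  funext j
  rcases j with i | y
  · rfl
  · simp only [heckeT, Sum.elim_inr, Pi.smul_apply, smul_eq_mul]
    ring

theorem apply_inr_inv_mul_eq_of_heckeT_eq_smul {ℓ₁ ℓ₂ : ℕ} (hℓ : (ℓ₁ : k) ≠ ℓ₂)
    {u : (ZMod N)ˣ} {a : Fin 2 ⊕ (ZMod N)ˣ → k}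
    (h₁ : heckeT ℓ₁ u a = ((ℓ₁ : k) + 1) • a) (h₂ : heckeT ℓ₂ u a = ((ℓ₂ : k) + 1) • a)
    (y : (ZMod N)ˣ) : a (Sum.inr (u⁻¹ * y)) = a (Sum.inr y) := by
  have e₁ := congrFun h₁ (Sum.inr y)
  have e₂ := congrFun h₂ (Sum.inr y)
  simp only [heckeT, Sum.elim_inr, Pi.smul_apply, smul_eq_mul] at e₁ e₂
  have : ((ℓ₁ : k) - ℓ₂) * (a (Sum.inr (u⁻¹ * y)) - a (Sum.inr y)) = 0 := by
    linear_combination e₁ - e₂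
  exact sub_eq_zero.1 ((mul_eq_zero.1 this).resolve_left (sub_ne_zero.2 hℓ))

variable (N k) in
/-- `𝔠 = ∑ₓ ([x] - [0])` in coordinates. -/
def eisensteinC : Fin 2 ⊕ (ZMod N)ˣ → k := Sum.elim ![0, 1 - (N : k)] fun _ => 1

variable (N k) in
/-- `∞ - [0] + 𝔠` in coordinates. -/
def eisensteinV : Fin 2 ⊕ (ZMod N)ˣ → k := Sum.elim ![1, -(N : k)] fun _ => 1

theorem single_sub_single_add_eisensteinC :
    Pi.single (Sum.inl 0) 1 - Pi.single (Sum.inl 1) 1 + eisensteinC N k = eisensteinV N k := by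
  funext j
  rcases j with i | y
  · fin_cases i
    · simp [eisensteinC, eisensteinV]
    · simp [eisensteinC, eisensteinV]
      ring
  · simp [eisensteinC, eisensteinV]

theorem linearIndependent_eisensteinV_eisensteinC :
    LinearIndependent k ![eisensteinV N k, eisensteinC N k] := by
  rw [linearIndependent_fin2]
  refine ⟨fun h => one_ne_zero (congrFun h (Sum.inr 1) :), fun s h => ?_⟩
  simpa [eisensteinC, eisensteinV] using congrFun h (Sum.inl 0)

variable [NeZero N]

def heckeU (f : Fin 2 ⊕ (ZMod N)ˣ → k) : Fin 2 ⊕ (ZMod N)ˣ → k :=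
  Sum.elim
    (fun i : Fin 2 => if i = 0 then f (Sum.inl 0)
      else (N : k) * (f (Sum.inl 1) + ∑ x : (ZMod N)ˣ, f (Sum.inr x)))
    (fun _ => f (Sum.inl 0))

theorem heckeU_sumElim_const (hN : N.Prime) (g : Fin 2 → k) (t : k) :
    heckeU (Sum.elim g fun _ : (ZMod N)ˣ => t) =
      Sum.elim ![g 0, N * (g 1 + (N - 1) * t)] fun _ => g 0 := by
  funext j
  rcases j with i | y
  · fin_cases i
    · rfl
    · simp [heckeU, hN.cast_totient]
  · rfl

theorem heckeU_eisensteinC (hN : N.Prime) : heckeU (eisensteinC N k) = 0 := by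
  rw [eisensteinC, heckeU_sumElim_const hN]
  funext j
  rcases j with i | y
  · fin_cases i <;> simp
  · rfl

theorem heckeU_eisensteinV (hN : N.Prime) : heckeU (eisensteinV N k) = eisensteinV N k := by
  rw [eisensteinV, heckeU_sumElim_const hN]
  funext j
  rcases j with i | y
  · fin_cases i
    · rfl
    · simp
      ring
  · rfl

theorem sum_single_inr_sub_single_inl (hN : N.Prime) :
    ∑ x : (ZMod N)ˣ, (Pi.single (Sum.inr x) 1 - Pi.single (Sum.inl 1) 1 : Fin 2 ⊕ (ZMod N)ˣ → k) =
      eisensteinC N k := by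
  funext j
  rcases j with i | y
  · fin_cases i <;> simp [eisensteinC, Finset.sum_apply, hN.cast_totient]
  · simp [eisensteinC, Finset.sum_apply, Pi.single_apply]

theorem eq_smul_add_smul_of_sum_eq_zero (hN : N.Prime) {a : Fin 2 ⊕ (ZMod N)ˣ → k}
    (hsum : ∑ j, a j = 0) (hconst : ∀ y, a (Sum.inr y) = a (Sum.inr 1)) :
    a = a (Sum.inl 0) • eisensteinV N k + (a (Sum.inr 1) - a (Sum.inl 0)) • eisensteinC N k := by
  have ha₁ : a (Sum.inl 1) = -a (Sum.inl 0) - (N - 1) * a (Sum.inr 1) := by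
    rw [Fintype.sum_sum_type, Fin.sum_univ_two, Finset.sum_congr rfl fun y _ => hconst y,
      Finset.sum_const, Finset.card_univ, ZMod.card_units_eq_totient, nsmul_eq_mul,
      hN.cast_totient] at hsum
    linear_combination hsum
  funext j
  rcases j with i | y
  · fin_cases i
    · simp [eisensteinC, eisensteinV]
    · simp [eisensteinC, eisensteinV, ha₁]
      ring
  · simp [eisensteinC, eisensteinV, hconst y]

theorem exists_primes_natCast_eq_natCast_ne {p : ℕ} (hp2 : 2 < p) [CharP k p]
    (hcop : N.Coprime p) (u : (ZMod N)ˣ) :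
    ∃ ℓ₁ ℓ₂ : ℕ, ℓ₁.Prime ∧ N < ℓ₁ ∧ (ℓ₁ : ZMod N) = u ∧
      ℓ₂.Prime ∧ N < ℓ₂ ∧ (ℓ₂ : ZMod N) = u ∧ (ℓ₁ : k) ≠ ℓ₂ := by
  have : Fact (2 < p) := ⟨hp2⟩
  have : NeZero p := ⟨by omega⟩
  have hcast (ℓ : ℕ) (w : ZMod p) (h : (ℓ : ZMod p) = w) :
      (ℓ : k) = ZMod.castHom dvd_rfl k w := by
    rw [← h, map_natCast]
  obtain ⟨ℓ₁, hNℓ₁, hℓ₁, hu₁, hw₁⟩ := Nat.exists_prime_gt_natCast_eq_of_coprime hcop u 1 N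
  obtain ⟨ℓ₂, hNℓ₂, hℓ₂, hu₂, hw₂⟩ := Nat.exists_prime_gt_natCast_eq_of_coprime hcop u (-1) N
  refine ⟨ℓ₁, ℓ₂, hℓ₁, hNℓ₁, hu₁, hℓ₂, hNℓ₂, hu₂, ?_⟩
  rw [hcast ℓ₁ _ hw₁, hcast ℓ₂ _ hw₂, Units.val_neg, Units.val_one, map_neg, map_one]
  exact (CharP.neg_one_ne_one k p).symm

theorem apply_inr_eq_of_forall_heckeT_eq_smul {p : ℕ} (hp2 : 2 < p) [CharP k p]
    (hcop : N.Coprime p) {a : Fin 2 ⊕ (ZMod N)ˣ → k}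
    (ha : ∀ (ℓ : ℕ) (u : (ZMod N)ˣ), ℓ.Prime → ℓ ≠ N → ((u : ZMod N) = (ℓ : ZMod N)) →
      heckeT ℓ u a = ((ℓ : k) + 1) • a) (y : (ZMod N)ˣ) :
    a (Sum.inr y) = a (Sum.inr 1) := by
  obtain ⟨ℓ₁, ℓ₂, hℓ₁, hNℓ₁, hu₁, hℓ₂, hNℓ₂, hu₂, hne⟩ :=
    exists_primes_natCast_eq_natCast_ne (k := k) hp2 hcop y
  have := apply_inr_inv_mul_eq_of_heckeT_eq_smul hne (ha ℓ₁ y hℓ₁ hNℓ₁.ne' hu₁.symm)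
    (ha ℓ₂ y hℓ₂ hNℓ₂.ne' hu₂.symm) y
  rwa [inv_mul_cancel, eq_comm] at this

end CuspidalDivisor

open CuspidalDivisor in
theorem cuspidal_divisor_eisenstein_eigenspace_general
    (p N : ℕ) (hp : p.Prime) (hp5 : 5 ≤ p) (hN : N.Prime) (hne : N ≠ p)
    [NeZero N]
    (k : Type*) [Field k] [CharP k p]
    (T : ℕ → (ZMod N)ˣ → ((Fin 2 ⊕ (ZMod N)ˣ) → k) → ((Fin 2 ⊕ (ZMod N)ˣ) → k))
    (hT : ∀ (ℓ : ℕ) (u : (ZMod N)ˣ) (f : (Fin 2 ⊕ (ZMod N)ˣ) → k),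
      T ℓ u f = Sum.elim (fun i => ((ℓ : k) + 1) * f (Sum.inl i))
        (fun y => (ℓ : k) * f (Sum.inr (u⁻¹ * y)) + f (Sum.inr (u * y))))
    (U : ((Fin 2 ⊕ (ZMod N)ˣ) → k) → ((Fin 2 ⊕ (ZMod N)ˣ) → k))
    (hU : ∀ f : (Fin 2 ⊕ (ZMod N)ˣ) → k,
      U f = Sum.elim
        (fun i : Fin 2 => if i = 0 then f (Sum.inl 0)
          else (N : k) * (f (Sum.inl 1) + ∑ x : (ZMod N)ˣ, f (Sum.inr x)))
        (fun _ => f (Sum.inl 0)))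
    (c : (Fin 2 ⊕ (ZMod N)ˣ) → k)
    (hc : c = ∑ x : (ZMod N)ˣ,
      (Pi.single (Sum.inr x) (1 : k) - Pi.single (Sum.inl 1) (1 : k)))
    (v : (Fin 2 ⊕ (ZMod N)ˣ) → k)
    (hv : v = Pi.single (Sum.inl 0) (1 : k) - Pi.single (Sum.inl 1) (1 : k) + c) :
    (LinearIndependent k ![v, c] ∧
      (∀ (ℓ : ℕ) (u : (ZMod N)ˣ), ℓ.Prime → ℓ ≠ N → ((u : ZMod N) = (ℓ : ZMod N)) →
        T ℓ u v = ((ℓ : k) + 1) • v ∧ T ℓ u c = ((ℓ : k) + 1) • c) ∧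
      U c = 0 ∧ U v = v) ∧
    ∀ a : (Fin 2 ⊕ (ZMod N)ˣ) → k, (∑ j, a j) = 0 →
      (∀ (ℓ : ℕ) (u : (ZMod N)ˣ), ℓ.Prime → ℓ ≠ N → ((u : ZMod N) = (ℓ : ZMod N)) →
        T ℓ u a = ((ℓ : k) + 1) • a) →
      ∃ s t : k, a = s • v + t • c := by
  obtain rfl : T = heckeT := funext fun ℓ => funext fun u => funext (hT ℓ u)
  obtain rfl : U = heckeU := funext hU
  obtain rfl : c = eisensteinC N k := hc.trans (sum_single_inr_sub_single_inl hN)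
  obtain rfl : v = eisensteinV N k := hv.trans single_sub_single_add_eisensteinC
  refine ⟨⟨linearIndependent_eisensteinV_eisensteinC, fun ℓ u _ _ _ => ?_,
    heckeU_eisensteinC hN, heckeU_eisensteinV hN⟩, fun a hsum ha => ?_⟩
  · exact ⟨heckeT_sumElim_const _ _ _ _, heckeT_sumElim_const _ _ _ _⟩
  · have hconst := apply_inr_eq_of_forall_heckeT_eq_smul (by omega)
      ((Nat.coprime_primes hN hp).2 hne) ha
    exact ⟨_, _, eq_smul_add_smul_of_sum_eq_zero hN hsum hconst⟩

/-- Eigenspace of the cuspidal divisor group: let `p ≥ 5` and `N` be distinct primes with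
`N ≢ 1 (mod p)` and `k` a field of characteristic `p`. Let `D` be the free `k`-module on
the basis `{∞, [0]} ∪ {[x] : x ∈ (ℤ/N)ˣ}` (indexed by `Fin 2 ⊕ (ZMod N)ˣ`, with
`Sum.inl 0 = ∞` and `Sum.inl 1 = [0]`), with Hecke operators `T ℓ` (for primes `ℓ ≠ N`,
acting through the unit `u = ℓ mod N`) and `U_N` as in the paper, and
`𝔠 = ∑_x ([x] - [0])`.  Then `∞ - [0] + 𝔠` and `𝔠` are linearly independent
`T_ℓ`-eigenvectors with eigenvalue `ℓ + 1`, `U_N 𝔠 = 0`, `U_N (∞ - [0] + 𝔠) = ∞ - [0] + 𝔠`,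
and conversely every degree-zero element killed by all `T_ℓ - (ℓ+1)` lies in their span. -/
theorem cuspidal_divisor_eisenstein_eigenspace
    (p N : ℕ) (hp : p.Prime) (hp5 : 5 ≤ p) (hN : N.Prime) (hne : N ≠ p)
    (hN1 : (N : ZMod p) ≠ 1) [NeZero N]
    (k : Type*) [Field k] [CharP k p]
    (T : ℕ → (ZMod N)ˣ → ((Fin 2 ⊕ (ZMod N)ˣ) → k) → ((Fin 2 ⊕ (ZMod N)ˣ) → k))
    (hT : ∀ (ℓ : ℕ) (u : (ZMod N)ˣ) (f : (Fin 2 ⊕ (ZMod N)ˣ) → k),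
      T ℓ u f = Sum.elim (fun i => ((ℓ : k) + 1) * f (Sum.inl i))
        (fun y => (ℓ : k) * f (Sum.inr (u⁻¹ * y)) + f (Sum.inr (u * y))))
    (U : ((Fin 2 ⊕ (ZMod N)ˣ) → k) → ((Fin 2 ⊕ (ZMod N)ˣ) → k))
    (hU : ∀ f : (Fin 2 ⊕ (ZMod N)ˣ) → k,
      U f = Sum.elim
        (fun i : Fin 2 => if i = 0 then f (Sum.inl 0)
          else (N : k) * (f (Sum.inl 1) + ∑ x : (ZMod N)ˣ, f (Sum.inr x)))
        (fun _ => f (Sum.inl 0)))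
    (c : (Fin 2 ⊕ (ZMod N)ˣ) → k)
    (hc : c = ∑ x : (ZMod N)ˣ,
      (Pi.single (Sum.inr x) (1 : k) - Pi.single (Sum.inl 1) (1 : k)))
    (v : (Fin 2 ⊕ (ZMod N)ˣ) → k)
    (hv : v = Pi.single (Sum.inl 0) (1 : k) - Pi.single (Sum.inl 1) (1 : k) + c) :
    (LinearIndependent k ![v, c] ∧
      (∀ (ℓ : ℕ) (u : (ZMod N)ˣ), ℓ.Prime → ℓ ≠ N → ((u : ZMod N) = (ℓ : ZMod N)) →
        T ℓ u v = ((ℓ : k) + 1) • v ∧ T ℓ u c = ((ℓ : k) + 1) • c) ∧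
      U c = 0 ∧ U v = v) ∧
    ∀ a : (Fin 2 ⊕ (ZMod N)ˣ) → k, (∑ j, a j) = 0 →
      (∀ (ℓ : ℕ) (u : (ZMod N)ˣ), ℓ.Prime → ℓ ≠ N → ((u : ZMod N) = (ℓ : ZMod N)) →
        T ℓ u a = ((ℓ : k) + 1) • a) →
      ∃ s t : k, a = s • v + t • c :=
  cuspidal_divisor_eisenstein_eigenspace_general p N hp hp5 hN hne k T hT U hU c hc v hv
end

section
/- Let N and p be primes with p ≥ 5, let F = Q(N^{1/p}) with ring of integers O_F, and let ℓ be a prime with ℓ ≠ p and ℓ ≠ N. Let r be the multiplicative order of ℓ modulo p. If the image of N in (Z/ℓZ)^× is not a p-th power, then ℓ is inert in F, i.e., ℓO_F is a prime ideal. If the image of N in (Z/ℓZ)^× is a p-th power, then there are exactly (p−1)/r + 1 prime ideals of O_F lying over ℓ, exactly one of which has residue degree 1 while all the others have residue degree r. -/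
/-!
Let `θ = N^{1/p}` and `f = X^p - N`, its minimal polynomial. Since the conductor of `ℤ[θ]` times
the different is `(f'(θ))`, the conductor contains `θ·f'(θ) = p·N`, which is prime to `ℓ`. So by
Dedekind–Kummer the primes of `𝓞 K` over `ℓ` correspond to the monic irreducible factors of
`f mod ℓ`, with residue degree the degree of the factor. If `N` is not a `p`-th power mod `ℓ`,
`f mod ℓ` is irreducible. If `N ≡ b^p`, then `X - b` is a factor, and for a root `γ` of any other
factor `g`, `γ/b` is a primitive `p`-th root of unity generating the same extension of `𝔽_ℓ`, so
`deg g` is the order `r` of `ℓ` mod `p`. As `f mod ℓ` is squarefree, `p = 1 + (#factors - 1)·r`.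
-/

open Polynomial NumberField UniqueFactorizationMonoid

theorem Nat.Prime.rat_pow_ne {N n : ℕ} (hN : N.Prime) (hn : n ≠ 1) (b : ℚ) : b ^ n ≠ N := by
  have : Fact N.Prime := ⟨hN⟩
  intro h
  have hv := congr_arg (padicValRat N) h
  rw [padicValRat.pow, padicValRat.self hN.one_lt] at hv
  exact hn (by exact_mod_cast Int.eq_one_of_mul_eq_one_right (Int.natCast_nonneg n) hv)

theorem Polynomial.sum_natDegree_normalizedFactors {F : Type*} [Field F] [DecidableEq F]
    {f : F[X]} (hf : f ≠ 0) : ((normalizedFactors f).map natDegree).sum = f.natDegree := by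
  rw [← natDegree_multiset_prod _ (zero_notMem_normalizedFactors _)]
  exact natDegree_eq_of_degree_eq (degree_eq_degree_of_associated (prod_normalizedFactors hf))

theorem Polynomial.X_sub_C_mem_normalizedFactors_X_pow_sub_C_pow {F : Type*} [Field F]
    [DecidableEq F] {p : ℕ} (hp : p ≠ 0) (b : F) :
    X - C b ∈ normalizedFactors (X ^ p - C (b ^ p)) :=
  (Polynomial.mem_normalizedFactors_iff
    (monic_X_pow_sub_C _ hp).ne_zero).mpr
    ⟨irreducible_X_sub_C b, monic_X_sub_C b, dvd_iff_isRoot.mpr (by simp [IsRoot])⟩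

section FiniteField

variable {F : Type*} [Field F] [Fintype F] {ℓ : ℕ} [CharP F ℓ]

theorem natDegree_eq_orderOf_card_of_dvd_cyclotomic {n : ℕ} (hn : ℓ.Coprime n) {g : F[X]}
    (hg : g ∣ cyclotomic n F) (hirr : Irreducible g) :
    g.natDegree = orderOf (Fintype.card F : ZMod n) := by
  obtain ⟨f, hℓ, hcard⟩ := FiniteField.card F ℓ
  have : Fact ℓ.Prime := ⟨hℓ⟩
  rw [natDegree_of_dvd_cyclotomic_of_irreducible hcard hn hg hirr, ← orderOf_units,
    ZMod.coe_unitOfCoprime, hcard]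

variable {p : ℕ} [Fact p.Prime]

theorem natDegree_eq_orderOf_card_of_dvd_X_pow_sub_C_pow (hℓp : ℓ ≠ p) {b : F} (hb : b ≠ 0)
    {g : F[X]} (hirr : Irreducible g) (hmonic : g.Monic) (hdvd : g ∣ X ^ p - C (b ^ p))
    (hne : g ≠ X - C b) : g.natDegree = orderOf (Fintype.card F : ZMod p) := by
  have : Fact (Irreducible g) := ⟨hirr⟩
  set γ := AdjoinRoot.root g
  have hγ : IsIntegral F γ := AdjoinRoot.isIntegral_root hirr.ne_zero
  have hminγ : minpoly F γ = g := by
    rw [AdjoinRoot.minpoly_root hirr.ne_zero, hmonic.leadingCoeff, inv_one, C_1, mul_one]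
  set ζ := b⁻¹ • γ
  have hζp : ζ ^ p = 1 := by
    have hγp := minpoly.dvd_iff.mp (hminγ ▸ hdvd)
    rw [map_sub, map_pow, aeval_X, aeval_C, sub_eq_zero] at hγp
    rw [_root_.smul_pow, hγp, Algebra.smul_def, ← map_mul, inv_pow,
      inv_mul_cancel₀ (pow_ne_zero _ hb), map_one]
  have hζ1 : ζ ≠ 1 := by
    intro h
    apply hne
    rw [← hminγ, show γ = b • ζ from (smul_inv_smul₀ hb γ).symm, h,
      ← Algebra.algebraMap_eq_smul_one]
    exact minpoly.eq_X_sub_C _ b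
  have hΦ : aeval ζ (cyclotomic p F) = 0 := by
    have := congr_arg (aeval ζ) (cyclotomic_prime_mul_X_sub_one F p)
    simpa [hζp, sub_eq_zero, hζ1] using this
  have hdeg : (minpoly F ζ).natDegree = g.natDegree := by
    rw [IsIntegrallyClosed.minpoly_smul (inv_ne_zero hb) hγ, natDegree_scaleRoots, hminγ]
  rw [← hdeg]
  exact natDegree_eq_orderOf_card_of_dvd_cyclotomic
    ((Nat.coprime_primes (CharP.char_is_prime F ℓ) Fact.out).mpr hℓp) (minpoly.dvd F ζ hΦ)
    (minpoly.irreducible (hγ.smul b⁻¹))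

variable [DecidableEq F]

theorem natDegree_eq_orderOf_card_of_mem_normalizedFactors (hℓp : ℓ ≠ p) {b : F} (hb : b ≠ 0)
    {g : F[X]} (hg : g ∈ normalizedFactors (X ^ p - C (b ^ p))) (hne : g ≠ X - C b) :
    g.natDegree = orderOf (Fintype.card F : ZMod p) := by
  obtain ⟨hirr, hmonic, hdvd⟩ := (Polynomial.mem_normalizedFactors_iff
    (monic_X_pow_sub_C _ (Fact.out : p.Prime).ne_zero).ne_zero).mp hg
  exact natDegree_eq_orderOf_card_of_dvd_X_pow_sub_C_pow hℓp hb hirr hmonic hdvd hne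

theorem card_normalizedFactors_X_pow_sub_C_pow (hℓp : ℓ ≠ p) {b : F} (hb : b ≠ 0) :
    (normalizedFactors (X ^ p - C (b ^ p))).toFinset.card =
      (p - 1) / orderOf (Fintype.card F : ZMod p) + 1 := by
  have hp : p.Prime := Fact.out
  set f : F[X] := X ^ p - C (b ^ p)
  set r := orderOf (Fintype.card F : ZMod p)
  have hf0 : f ≠ 0 := (monic_X_pow_sub_C _ hp.ne_zero).ne_zero
  have hsep : f.Separable := separable_X_pow_sub_C' ℓ p _
    ((Nat.prime_dvd_prime_iff_eq (CharP.char_is_prime F ℓ) hp).not.mpr hℓp) (pow_ne_zero _ hb)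
  have hnodup := (squarefree_iff_nodup_normalizedFactors hf0).mp hsep.squarefree
  have hlin : X - C b ∈ normalizedFactors f :=
    X_sub_C_mem_normalizedFactors_X_pow_sub_C_pow hp.ne_zero b
  have hdeg : ∀ g ∈ (normalizedFactors f).erase (X - C b), g.natDegree = r := fun g hg ↦
    have ⟨hne, hg⟩ := hnodup.mem_erase_iff.mp hg
    natDegree_eq_orderOf_card_of_mem_normalizedFactors hℓp hb hg hne
  have hp_eq : p = 1 + ((normalizedFactors f).erase (X - C b)).card * r := by
    have hsum := sum_natDegree_normalizedFactors hf0
    rw [← Multiset.cons_erase hlin, Multiset.map_cons, Multiset.sum_cons,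
      Multiset.map_congr rfl hdeg, Multiset.map_const', Multiset.sum_replicate, smul_eq_mul,
      natDegree_X_sub_C, natDegree_X_pow_sub_C] at hsum
    exact hsum.symm
  have hr : 0 < r := Nat.pos_of_ne_zero fun h ↦ hp.one_lt.ne' (by simpa [h] using hp_eq)
  rw [Multiset.toFinset_card_of_nodup hnodup, ← Multiset.card_erase_add_one hlin, hp_eq,
    Nat.add_sub_cancel_left, Nat.mul_div_cancel _ hr]

end FiniteField

theorem Ideal.mem_primesOver_span_natCast_iff {S : Type*} [CommRing S] {P : Ideal S} {ℓ : ℕ}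
    (hℓ : ℓ.Prime) : P ∈ primesOver (span {(ℓ : ℤ)}) S ↔ P.IsPrime ∧ (ℓ : S) ∈ P := by
  refine ⟨fun ⟨hP, hPℓ⟩ ↦ ⟨hP, ?_⟩, fun ⟨hP, hℓP⟩ ↦ ⟨hP, ?_⟩⟩
  · simpa using (liesOver_span_iff hP.ne_top (Nat.prime_iff_prime_int.mp hℓ)).mp hPℓ
  · exact (liesOver_span_iff hP.ne_top (Nat.prime_iff_prime_int.mp hℓ)).mpr (by simpa using hℓP)

namespace RingOfIntegers

open Ideal

variable {K : Type*} [Field K]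

theorem not_dvd_exponent_of_intCast_mem_conductor {θ : 𝓞 K} {ℓ : ℕ} [Fact ℓ.Prime] {d : ℤ}
    (hd : (d : 𝓞 K) ∈ conductor ℤ θ) (hℓd : ¬ (ℓ : ℤ) ∣ d) : ¬ ℓ ∣ exponent θ := by
  obtain ⟨u, v, huv⟩ := ((Nat.prime_iff_prime_int.mp Fact.out).coprime_iff_not_dvd).mpr hℓd
  rw [not_dvd_exponent_iff, codisjoint_iff, eq_top_iff_one, ← huv]
  exact add_mem (mem_sup_right (mul_mem_left _ _ (mem_span_singleton_self _)))
    (mem_sup_left (mul_mem_left _ _ (by simpa using hd)))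

variable [NumberField K]

theorem minpoly_int_eq_X_pow_sub_C {θ : 𝓞 K} {n : ℕ} {a : ℤ} (hθ : (θ : K) ^ n = a)
    (hirr : Irreducible (X ^ n - C (a : ℚ))) : minpoly ℤ θ = X ^ n - C a := by
  have hn : n ≠ 0 := by
    rintro rfl
    exact not_irreducible_C (1 - (a : ℚ)) (by simpa using hirr)
  have hmin : minpoly ℚ (θ : K) = X ^ n - C (a : ℚ) :=
    (minpoly.eq_of_irreducible_of_monic hirr (by simp [hθ]) (monic_X_pow_sub_C _ hn)).symm
  apply map_injective (algebraMap ℤ ℚ) (algebraMap ℤ ℚ).injective_int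
  rw [← minpoly.isIntegrallyClosed_eq_field_fractions ℚ K θ.isIntegral]
  simpa using hmin

theorem aeval_derivative_minpoly_mem_conductor {θ : 𝓞 K}
    (hθ : Algebra.adjoin ℚ {(θ : K)} = ⊤) :
    aeval θ (derivative (minpoly ℤ θ)) ∈ conductor ℤ θ := by
  refine (mul_le_left : conductor ℤ θ * differentIdeal ℤ (𝓞 K) ≤ _) ?_
  rw [conductor_mul_differentIdeal ℤ ℚ K θ hθ]
  exact mem_span_singleton_self _

theorem natCast_mul_intCast_mem_conductor {θ : 𝓞 K} {n : ℕ} {a : ℤ}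
    (hgen : Algebra.adjoin ℚ {(θ : K)} = ⊤) (hθ : (θ : K) ^ n = a)
    (hmin : minpoly ℤ θ = X ^ n - C a) : ((n * a : ℤ) : 𝓞 K) ∈ conductor ℤ θ := by
  have hθ' : θ ^ n = a := RingOfIntegers.ext (by simpa using hθ)
  convert mul_mem_left _ θ (aeval_derivative_minpoly_mem_conductor hgen) using 1
  rw [hmin, derivative_sub, derivative_C, sub_zero, derivative_X_pow]
  rcases n with _ | n
  · simp
  · simp [← hθ', pow_succ]
    ring

variable {θ : 𝓞 K} {ℓ : ℕ} [Fact ℓ.Prime]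

theorem isPrime_span_natCast_of_irreducible (hℓ : ¬ ℓ ∣ exponent θ)
    (hirr : Irreducible ((minpoly ℤ θ).map (Int.castRingHom (ZMod ℓ)))) :
    (span {(ℓ : 𝓞 K)}).IsPrime := by
  have := (Quotient.isDomain_iff_prime _).mpr ((span_singleton_prime hirr.ne_zero).mpr hirr.prime)
  rw [← Quotient.isDomain_iff_prime]
  exact (ZModXQuotSpanEquivQuotSpan hℓ).symm.toMulEquiv.isDomain

theorem natCard_primes_over_eq_card_monicFactorsMod (hℓ : ¬ ℓ ∣ exponent θ) :
    Nat.card {P : Ideal (𝓞 K) // P.IsPrime ∧ (ℓ : 𝓞 K) ∈ P} = (monicFactorsMod θ ℓ).card := by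
  rw [← Nat.card_eq_finsetCard, ← Nat.card_congr (primesOverSpanEquivMonicFactorsMod hℓ)]
  exact Nat.card_congr (Equiv.subtypeEquivRight fun _ ↦
    (mem_primesOver_span_natCast_iff Fact.out).symm)

theorem absNorm_eq_pow_natDegree_primesOverSpanEquivMonicFactorsMod (hℓ : ¬ ℓ ∣ exponent θ)
    (P : primesOver (span {(ℓ : ℤ)}) (𝓞 K)) :
    absNorm (P : Ideal (𝓞 K)) = ℓ ^ (primesOverSpanEquivMonicFactorsMod hℓ P).1.natDegree := by
  obtain ⟨hP, hPℓ⟩ := P.prop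
  rw [← NumberField.Ideal.inertiaDeg_primesOverSpanEquivMonicFactorsMod_symm_apply' hℓ
    (primesOverSpanEquivMonicFactorsMod hℓ P).prop, Subtype.coe_eta, Equiv.symm_apply_apply]
  exact (pow_inertiaDeg ℓ _).symm

theorem splitting_of_map_minpoly_eq_X_pow_sub_C_pow {p : ℕ} [Fact p.Prime]
    (hℓ : ¬ ℓ ∣ exponent θ) (hℓp : ℓ ≠ p) {b : ZMod ℓ} (hb : b ≠ 0)
    (hmod : (minpoly ℤ θ).map (Int.castRingHom (ZMod ℓ)) = X ^ p - C (b ^ p)) :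
    Nat.card {P : Ideal (𝓞 K) // P.IsPrime ∧ (ℓ : 𝓞 K) ∈ P} =
        (p - 1) / orderOf (ℓ : ZMod p) + 1 ∧
      ∃ P₀ : Ideal (𝓞 K), P₀.IsPrime ∧ (ℓ : 𝓞 K) ∈ P₀ ∧ absNorm P₀ = ℓ ∧
        ∀ P : Ideal (𝓞 K), P.IsPrime → (ℓ : 𝓞 K) ∈ P → P ≠ P₀ →
          absNorm P = ℓ ^ orderOf (ℓ : ZMod p) := by
  have hfac : monicFactorsMod θ ℓ = (normalizedFactors (X ^ p - C (b ^ p))).toFinset := by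
    rw [monicFactorsMod, hmod]
  let e := primesOverSpanEquivMonicFactorsMod hℓ
  have hlin : X - C b ∈ monicFactorsMod θ ℓ := hfac ▸ Multiset.mem_toFinset.mpr
    (X_sub_C_mem_normalizedFactors_X_pow_sub_C_pow (Fact.out : p.Prime).ne_zero b)
  have hmem {P : Ideal (𝓞 K)} := mem_primesOver_span_natCast_iff (P := P) (Fact.out : ℓ.Prime)
  refine ⟨?_, e.symm ⟨_, hlin⟩, ?_⟩
  · rw [natCard_primes_over_eq_card_monicFactorsMod hℓ, hfac,
      card_normalizedFactors_X_pow_sub_C_pow hℓp hb, ZMod.card]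
  obtain ⟨hP₀, hℓP₀⟩ := hmem.mp (e.symm ⟨_, hlin⟩).prop
  refine ⟨hP₀, hℓP₀, ?_, fun P hP hℓP hne ↦ ?_⟩
  · rw [absNorm_eq_pow_natDegree_primesOverSpanEquivMonicFactorsMod hℓ, e.apply_symm_apply,
      natDegree_X_sub_C, pow_one]
  have hP : P ∈ primesOver (span {(ℓ : ℤ)}) (𝓞 K) := hmem.mpr ⟨hP, hℓP⟩
  have hne : (e ⟨P, hP⟩).1 ≠ X - C b := fun h ↦
    hne (congrArg Subtype.val ((e.eq_symm_apply (y := ⟨P, hP⟩)).mpr (Subtype.ext h)))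
  have hdeg := natDegree_eq_orderOf_card_of_mem_normalizedFactors hℓp hb
    (Multiset.mem_toFinset.mp (hfac ▸ (e ⟨P, hP⟩).prop)) hne
  rw [ZMod.card] at hdeg
  rw [← hdeg]
  exact absNorm_eq_pow_natDegree_primesOverSpanEquivMonicFactorsMod hℓ ⟨P, hP⟩

end RingOfIntegers

theorem splitting_in_Q_Nth_root_general
    (N p ℓ : ℕ) (hN : N.Prime) (hp : p.Prime) (hl : ℓ.Prime)
    (hlp : ℓ ≠ p) (hlN : ℓ ≠ N)
    (K : Type*) [Field K] [NumberField K] (α : K)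
    (hroot : α ^ p = (N : K)) (hgen : Algebra.adjoin ℚ {α} = ⊤)
    (r : ℕ) (hr : r = orderOf (ℓ : ZMod p)) :
    ((¬ ∃ b : ZMod ℓ, b ^ p = (N : ZMod ℓ)) →
      (Ideal.span {(ℓ : 𝓞 K)}).IsPrime) ∧
    ((∃ b : ZMod ℓ, b ^ p = (N : ZMod ℓ)) →
      Nat.card {P : Ideal (𝓞 K) // P.IsPrime ∧ (ℓ : 𝓞 K) ∈ P} = (p - 1) / r + 1 ∧
      ∃ P₀ : Ideal (𝓞 K), P₀.IsPrime ∧ (ℓ : 𝓞 K) ∈ P₀ ∧ Ideal.absNorm P₀ = ℓ ∧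
        ∀ P : Ideal (𝓞 K), P.IsPrime → (ℓ : 𝓞 K) ∈ P → P ≠ P₀ →
          Ideal.absNorm P = ℓ ^ r) := by
  have : Fact ℓ.Prime := ⟨hl⟩
  have : Fact p.Prime := ⟨hp⟩
  subst hr
  let θ : 𝓞 K := ⟨α, .of_pow hp.pos (hroot ▸ isIntegral_natCast N)⟩
  have hθ : (θ : K) ^ p = ((N : ℤ) : K) := by rw [Int.cast_natCast]; exact hroot
  have hmin : minpoly ℤ θ = X ^ p - C (N : ℤ) := RingOfIntegers.minpoly_int_eq_X_pow_sub_C hθ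
    (X_pow_sub_C_irreducible_of_prime hp (by simpa using hN.rat_pow_ne hp.ne_one))
  have hℓpN : ¬ (ℓ : ℤ) ∣ p * N := by
    exact_mod_cast hl.coprime_iff_not_dvd.mp
      (((Nat.coprime_primes hl hp).mpr hlp).mul_right ((Nat.coprime_primes hl hN).mpr hlN))
  have hℓ : ¬ ℓ ∣ RingOfIntegers.exponent θ :=
    RingOfIntegers.not_dvd_exponent_of_intCast_mem_conductor
      (RingOfIntegers.natCast_mul_intCast_mem_conductor hgen hθ hmin) hℓpN
  have hmod : (minpoly ℤ θ).map (Int.castRingHom (ZMod ℓ)) = X ^ p - C (N : ZMod ℓ) := by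
    simp [hmin]
  refine ⟨fun hnot ↦ RingOfIntegers.isPrime_span_natCast_of_irreducible hℓ
    (hmod ▸ X_pow_sub_C_irreducible_of_prime hp (by simpa using hnot)), fun ⟨b, hb⟩ ↦ ?_⟩
  have hb0 : b ≠ 0 := by
    rintro rfl
    rw [zero_pow hp.ne_zero, eq_comm, ZMod.natCast_eq_zero_iff] at hb
    exact hlN ((Nat.prime_dvd_prime_iff_eq hl hN).mp hb)
  exact RingOfIntegers.splitting_of_map_minpoly_eq_X_pow_sub_C_pow hℓ hlp hb0 (hb ▸ hmod)

/-- Splitting of a prime `ℓ ≠ p, N` in `F = ℚ(N^{1/p})`: let `r` be the multiplicative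
order of `ℓ` modulo `p`. If `N` is not a `p`-th power mod `ℓ` then `ℓ` is inert in `F`.
If `N` is a `p`-th power mod `ℓ` then there are exactly `(p-1)/r + 1` primes of `𝓞 F`
over `ℓ`, one of residue degree `1` (absolute norm `ℓ`) and all the others of residue
degree `r` (absolute norm `ℓ^r`). -/
theorem splitting_in_Q_Nth_root
    (N p ℓ : ℕ) (hN : N.Prime) (hp : p.Prime) (hl : ℓ.Prime) (hp5 : 5 ≤ p)
    (hNp : N ≠ p) (hlp : ℓ ≠ p) (hlN : ℓ ≠ N)
    (K : Type*) [Field K] [NumberField K] (α : K)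
    (hroot : α ^ p = (N : K)) (hgen : Algebra.adjoin ℚ {α} = ⊤)
    (r : ℕ) (hr : r = orderOf (ℓ : ZMod p)) :
    ((¬ ∃ b : ZMod ℓ, b ^ p = (N : ZMod ℓ)) →
      (Ideal.span {(ℓ : 𝓞 K)}).IsPrime) ∧
    ((∃ b : ZMod ℓ, b ^ p = (N : ZMod ℓ)) →
      Nat.card {P : Ideal (𝓞 K) // P.IsPrime ∧ (ℓ : 𝓞 K) ∈ P} = (p - 1) / r + 1 ∧
      ∃ P₀ : Ideal (𝓞 K), P₀.IsPrime ∧ (ℓ : 𝓞 K) ∈ P₀ ∧ Ideal.absNorm P₀ = ℓ ∧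
        ∀ P : Ideal (𝓞 K), P.IsPrime → (ℓ : 𝓞 K) ∈ P → P ≠ P₀ →
          Ideal.absNorm P = ℓ ^ r) :=
  splitting_in_Q_Nth_root_general N p ℓ hN hp hl hlp hlN K α hroot hgen r hr
end

section
/- Let p and N be distinct primes and let ℓ be a prime not dividing Np. Suppose the image of N in the finite field F_ℓ is a p-th power, and let r be the multiplicative order of ℓ in (Z/pZ)^×. Then the polynomial x^p − N ∈ F_ℓ[x] is separable and factors as a product of exactly one monic linear polynomial and (p−1)/r pairwise distinct monic irreducible polynomials, each of degree r. -/
/-!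
Write `X ^ p - b ^ p = (X - b) * Q`. The substitution `X ↦ b * X` turns every irreducible factor
of `Q` into an irreducible factor of the `p`-th cyclotomic polynomial, and over `𝔽_ℓ` these all
have degree `r`, the order of `ℓ` mod `p`. Separability makes the factors of `Q` distinct, and
comparing degrees shows there are `(p - 1) / r` of them.
-/

open Polynomial UniqueFactorizationMonoid

theorem Multiset.Nodup.exists_injective_fin {α : Type*} [CommMonoid α] {M : Multiset α}
    (hM : M.Nodup) {n : ℕ} (hn : Multiset.card M = n) :
    ∃ g : Fin n → α, M.prod = ∏ i, g i ∧ (∀ i, g i ∈ M) ∧ Function.Injective g := by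
  subst hn
  rcases M with ⟨l⟩
  exact ⟨l.get, (Fin.prod_univ_getElem l).symm, l.get_mem, List.nodup_iff_injective_get.mp hM⟩

namespace Polynomial

variable {K : Type*} [Field K]

theorem irreducible_comp_C_mul_X {g : K[X]} {b : K} (hb : b ≠ 0) (hg : Irreducible g) :
    Irreducible (g.comp (C b * X)) := by
  let σ := algEquivOfCompEqX (C b * X) (C b⁻¹ * X)
    (by simp [← mul_assoc, ← C_mul, hb]) (by simp [← mul_assoc, ← C_mul, hb])
  rw [comp_eq_aeval, ← algEquivOfCompEqX_apply]
  exact (MulEquiv.irreducible_iff (f := σ)).mpr hg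

theorem comp_C_mul_X_dvd_cyclotomic_of_dvd_X_pow_sub_C {p : ℕ} (hp : p.Prime) {b : K}
    (hb : b ≠ 0) {g : K[X]} (hdvd : g ∣ X ^ p - C (b ^ p)) (hgb : ¬ g.IsRoot b) :
    g.comp (C b * X) ∣ cyclotomic p K := by
  have := Fact.mk hp
  have hcomp :
      (X ^ p - C (b ^ p)).comp (C b * X) = C (b ^ p) * (cyclotomic p K * (X - C 1)) := by
    rw [C_1, cyclotomic_prime_mul_X_sub_one K p]
    simp [mul_pow, mul_sub]
  have hcop : IsCoprime (g.comp (C b * X)) (X - C 1) := by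
    refine ((irreducible_X_sub_C 1).coprime_iff_not_dvd.mpr ?_).symm
    rw [dvd_iff_isRoot, IsRoot, eval_comp]
    simpa using hgb
  obtain ⟨k, hk⟩ := hdvd
  have hdvd_comp : g.comp (C b * X) ∣ C (b ^ p) * (cyclotomic p K * (X - C 1)) :=
    ⟨k.comp (C b * X), by rw [← mul_comp, ← hk, hcomp]⟩
  exact hcop.dvd_of_dvd_mul_right
    ((isUnit_C.mpr (IsUnit.mk0 _ (pow_ne_zero p hb))).dvd_mul_left.mp hdvd_comp)

theorem natDegree_eq_orderOf_card_of_irreducible_dvd_cyclotomic [Fintype K] {n : ℕ}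
    (hn : (Fintype.card K).Coprime n) {P : K[X]} (hP : P ∣ cyclotomic n K)
    (hirr : Irreducible P) :
    P.natDegree = orderOf (Fintype.card K : ZMod n) := by
  obtain ⟨q, -, f, hq, hcard⟩ := FiniteField.card' K
  have := Fact.mk hq
  have hqn : q.Coprime n := Nat.Coprime.coprime_dvd_left (dvd_pow_self q f.ne_zero) (hcard ▸ hn)
  rw [natDegree_of_dvd_cyclotomic_of_irreducible hcard hqn hP hirr, ← orderOf_units,
    ZMod.coe_unitOfCoprime, hcard]

theorem natDegree_eq_orderOf_card_of_irreducible_dvd_X_pow_sub_C [Fintype K] {p : ℕ}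
    (hp : p.Prime) (hKp : ¬ p ∣ Fintype.card K) {b : K} (hb : b ≠ 0) {g : K[X]}
    (hg : Irreducible g) (hdvd : g ∣ X ^ p - C (b ^ p)) (hgb : ¬ g.IsRoot b) :
    g.natDegree = orderOf (Fintype.card K : ZMod p) := by
  rw [← natDegree_eq_orderOf_card_of_irreducible_dvd_cyclotomic
    (hp.coprime_iff_not_dvd.mpr hKp).symm
    (comp_C_mul_X_dvd_cyclotomic_of_dvd_X_pow_sub_C hp hb hdvd hgb)
    (irreducible_comp_C_mul_X hb hg),
    natDegree_comp, natDegree_C_mul_X b hb, mul_one]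

theorem Separable.not_isRoot_divByMonic {f : K[X]} (hf : f.Separable) {b : K} (hb : f.IsRoot b) :
    ¬ (f /ₘ (X - C b)).IsRoot b := by
  rw [← dvd_iff_isRoot]
  rintro ⟨k, hk⟩
  refine not_isUnit_X_sub_C b (hf.squarefree (X - C b) ⟨k, ?_⟩)
  rw [mul_assoc, ← hk, mul_divByMonic_eq_iff_isRoot.mpr hb]

theorem exists_fin_prod_eq_of_monic_of_squarefree {Q : K[X]} (hQ : Q.Monic) (hsq : Squarefree Q)
    {r : ℕ} (hdeg : ∀ g, Irreducible g → g ∣ Q → g.natDegree = r) :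
    ∃ g : Fin (Q.natDegree / r) → K[X], Q = ∏ i, g i ∧
      (∀ i, (g i).Monic ∧ Irreducible (g i) ∧ (g i).natDegree = r) ∧
      Function.Injective g := by
  classical
  set M := normalizedFactors Q
  have hmem : ∀ g ∈ M, Irreducible g ∧ g.Monic ∧ g ∣ Q := fun g =>
    (Polynomial.mem_normalizedFactors_iff hQ.ne_zero).mp
  have hdegM : ∀ g ∈ M, g.natDegree = r := fun g hg => hdeg g (hmem g hg).1 (hmem g hg).2.2
  have hprod : M.prod = Q := by
    simpa [hQ.leadingCoeff] using leadingCoeff_mul_prod_normalizedFactors Q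
  have hcard : Multiset.card M = Q.natDegree / r := by
    have hsum : Q.natDegree = Multiset.card M * r := by
      rw [← hprod, natDegree_multiset_prod_of_monic _ (fun g hg => (hmem g hg).2.1),
        Multiset.map_congr rfl hdegM, Multiset.map_const', Multiset.sum_replicate, smul_eq_mul]
    rcases Nat.eq_zero_or_pos r with rfl | hr
    · -- `Q` has no irreducible factor, so the junk value `Q.natDegree / 0 = 0` is the right count
      rw [Nat.div_zero]
      refine Multiset.card_eq_zero.mpr (Multiset.eq_zero_of_forall_notMem fun g hg => ?_)
      exact (hmem g hg).1.natDegree_pos.ne' (hdegM g hg)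
    · rw [hsum, Nat.mul_div_cancel _ hr]
  obtain ⟨g, hg, hgM, hinj⟩ :=
    ((squarefree_iff_nodup_normalizedFactors hQ.ne_zero).mp hsq).exists_injective_fin hcard
  refine ⟨g, hprod.symm.trans hg, fun i => ?_, hinj⟩
  exact ⟨(hmem _ (hgM i)).2.1, (hmem _ (hgM i)).1, hdegM _ (hgM i)⟩

end Polynomial

theorem factorization_xp_sub_N_mod_l_general
    (p N ℓ : ℕ) (hp : p.Prime) (hl : ℓ.Prime)
    (hdvd : ¬ ℓ ∣ N * p) (hpow : ∃ b : ZMod ℓ, b ^ p = (N : ZMod ℓ))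
    (r : ℕ) (hr : r = orderOf (ℓ : ZMod p)) :
    (X ^ p - C (N : ZMod ℓ)).Separable ∧
    ∃ (c : ZMod ℓ) (g : Fin ((p - 1) / r) → (ZMod ℓ)[X]),
      X ^ p - C (N : ZMod ℓ) = (X - C c) * ∏ i, g i ∧
      (∀ i, (g i).Monic ∧ Irreducible (g i) ∧ (g i).natDegree = r) ∧
      Function.Injective g := by
  have := Fact.mk hl
  have hN0 : (N : ZMod ℓ) ≠ 0 := by
    rw [Ne, ZMod.natCast_eq_zero_iff]; exact fun h => hdvd (h.mul_right p)
  have hp0 : (p : ZMod ℓ) ≠ 0 := by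
    rw [Ne, ZMod.natCast_eq_zero_iff]; exact fun h => hdvd (h.mul_left N)
  have hpℓ : ¬ p ∣ Fintype.card (ZMod ℓ) := by
    rw [ZMod.card]
    exact fun h => hp0 (by rw [(Nat.prime_dvd_prime_iff_eq hp hl).mp h, ZMod.natCast_self])
  obtain ⟨b, hb⟩ := hpow
  have hb0 : b ≠ 0 := by rintro rfl; exact hN0 (by rw [← hb, zero_pow hp.ne_zero])
  have hsep := separable_X_pow_sub_C _ hp0 hN0
  rw [← hb] at hsep ⊢
  have hroot : (X ^ p - C (b ^ p)).IsRoot b := by simp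
  set Q := (X ^ p - C (b ^ p)) /ₘ (X - C b)
  have hfac : X ^ p - C (b ^ p) = (X - C b) * Q := (mul_divByMonic_eq_iff_isRoot.mpr hroot).symm
  have hQ : Q.Monic := (monic_X_sub_C b).of_mul_monic_left (hfac ▸ monic_X_pow_sub_C _ hp.ne_zero)
  have hdegQ : Q.natDegree = p - 1 := by
    rw [natDegree_divByMonic _ (monic_X_sub_C b), natDegree_X_pow_sub_C, natDegree_X_sub_C]
  have hfactors :=
    exists_fin_prod_eq_of_monic_of_squarefree hQ (hfac ▸ hsep.squarefree).of_mul_right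
      (r := r) fun g hg hgQ => by
        rw [hr]
        simpa only [ZMod.card] using
          natDegree_eq_orderOf_card_of_irreducible_dvd_X_pow_sub_C hp hpℓ hb0 hg
            (hgQ.trans (Dvd.intro_left _ hfac.symm))
            fun hgb => hsep.not_isRoot_divByMonic hroot (hgb.dvd hgQ)
  rw [hdegQ] at hfactors
  obtain ⟨g, hgQ, hg, hinj⟩ := hfactors
  exact ⟨hsep, b, g, hfac.trans (congrArg _ hgQ), hg, hinj⟩

/-- Let `p, N, ℓ` be primes with `p ≠ N` and `ℓ ∤ Np`, suppose `N` is a `p`-th power in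
`𝔽_ℓ`, and let `r` be the multiplicative order of `ℓ` mod `p`. Then `x^p - N ∈ 𝔽_ℓ[x]` is
separable and factors as the product of exactly one monic linear polynomial and
`(p-1)/r` pairwise distinct monic irreducible polynomials, each of degree `r`. -/
theorem factorization_xp_sub_N_mod_l
    (p N ℓ : ℕ) (hp : p.Prime) (hN : N.Prime) (hl : ℓ.Prime) (hpN : p ≠ N)
    (hdvd : ¬ ℓ ∣ N * p) (hpow : ∃ b : ZMod ℓ, b ^ p = (N : ZMod ℓ))
    (r : ℕ) (hr : r = orderOf (ℓ : ZMod p)) :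
    (X ^ p - C (N : ZMod ℓ)).Separable ∧
    ∃ (c : ZMod ℓ) (g : Fin ((p - 1) / r) → (ZMod ℓ)[X]),
      X ^ p - C (N : ZMod ℓ) = (X - C c) * ∏ i, g i ∧
      (∀ i, (g i).Monic ∧ Irreducible (g i) ∧ (g i).natDegree = r) ∧
      Function.Injective g :=
  factorization_xp_sub_N_mod_l_general p N ℓ hp hl hdvd hpow r hr
end
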